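/- arXiv:1909.01502 — 4 statements merged into one kernel-verified Lean document; each statement's English description precedes it below -/
import Mathlib

section
/- The Laplace mechanism adding noise drawn from Laplace(0, s/ε) to a real-valued function f with sensitivity s satisfies (ε, 0)-differential privacy. -/
/-! Translating a measure with density `p` by `a` gives the density `p (· - a)`, and the Laplace
density satisfies `p (x - t) ≤ exp (|t| / b) · p x` by the triangle inequality. Hence the output
laws of the mechanism on two neighbours differ at most by the factor `exp (|f d - f d'| / b)`,
which is at most `exp ε` for `b = s / ε`. -/

open MeasureTheory Real
open scoped ENNReal

/-- The mean-zero Laplace distribution with scale `b`, with density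
`(1/(2b))·exp(−|x|/b)` with respect to Lebesgue measure. -/
noncomputable def laplaceMeasure (b : ℝ) : Measure ℝ :=
  volume.withDensity (fun x => ENNReal.ofReal ((1 / (2 * b)) * Real.exp (-|x| / b)))

theorem map_add_left_withDensity {G : Type*} [MeasurableSpace G] [AddGroup G] [MeasurableAdd G]
    (μ : Measure G) [μ.IsAddLeftInvariant] (g : G → ℝ≥0∞) (a : G) :
    (μ.withDensity g).map (a + ·) = μ.withDensity (fun x => g (-a + x)) := by
  ext S hS
  rw [Measure.map_apply (measurable_const_add a) hS,
    withDensity_apply _ (measurable_const_add a hS), withDensity_apply _ hS,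
    ← (measurePreserving_add_left μ a).setLIntegral_comp_preimage_emb
      (measurableEmbedding_addLeft a) (fun x => g (-a + x)) S]
  simp only [neg_add_cancel_left]

theorem withDensity_le_smul_withDensity {α : Type*} [MeasurableSpace α] {μ : Measure α}
    {f g : α → ℝ≥0∞} {c : ℝ≥0∞} (hc : c ≠ ∞) (hfg : ∀ x, f x ≤ c * g x) :
    μ.withDensity f ≤ c • μ.withDensity g := by
  rw [← withDensity_smul' c g hc]
  exact withDensity_mono (Filter.Eventually.of_forall hfg)

theorem exp_neg_abs_sub_div_le {b : ℝ} (hb : 0 ≤ b) (x t : ℝ) :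
    exp (-|x - t| / b) ≤ exp (|t| / b) * exp (-|x| / b) := by
  rw [← exp_add, exp_le_exp, ← add_div]
  gcongr
  linarith [abs_sub_abs_le_abs_sub x t]

theorem laplaceMeasure_map_add_le {b : ℝ} (hb : 0 ≤ b) (a a' : ℝ) :
    (laplaceMeasure b).map (a + ·) ≤
      ENNReal.ofReal (exp (|a - a'| / b)) • (laplaceMeasure b).map (a' + ·) := by
  simp only [laplaceMeasure, map_add_left_withDensity]
  refine withDensity_le_smul_withDensity ENNReal.ofReal_ne_top fun x => ?_
  rw [← ENNReal.ofReal_mul (exp_nonneg _)]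
  refine ENNReal.ofReal_le_ofReal ?_
  have hshift : -a + x = (-a' + x) - (a - a') := by ring
  rw [hshift, mul_left_comm]
  gcongr
  exact exp_neg_abs_sub_div_le hb _ _

theorem laplace_mechanism_dp_general {D : Type*}
    (Neighbor : D → D → Prop) (f : D → ℝ) (s ε : ℝ) (hε : 0 < ε)
    (hsens : ∀ d d', Neighbor d d' → |f d - f d'| ≤ s) :
    ∀ d d', Neighbor d d' → ∀ S : Set ℝ, MeasurableSet S →
      (laplaceMeasure (s / ε)).map (fun z => f d + z) S ≤
        ENNReal.ofReal (Real.exp ε) *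
          (laplaceMeasure (s / ε)).map (fun z => f d' + z) S := by
  intro d d' hnb S _
  have hsens_dd' := hsens d d' hnb
  have hs : 0 ≤ s := (abs_nonneg _).trans hsens_dd'
  have hratio : |f d - f d'| / (s / ε) ≤ ε := by
    rw [div_div_eq_mul_div]
    exact div_le_of_le_mul₀ hs hε.le (by rw [mul_comm]; gcongr)
  calc (laplaceMeasure (s / ε)).map (fun z => f d + z) S
      ≤ ENNReal.ofReal (exp (|f d - f d'| / (s / ε))) *
          (laplaceMeasure (s / ε)).map (fun z => f d' + z) S :=
        laplaceMeasure_map_add_le (div_nonneg hs hε.le) _ _ S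
    _ ≤ _ := by gcongr

/-- the Laplace mechanism `d ↦ f(d) + Z` with `Z ∼ Laplace(0, s/ε)`
applied to a function `f` of sensitivity `s` satisfies `(ε, 0)`-differential
privacy. -/
theorem laplace_mechanism_dp {D : Type*}
    (Neighbor : D → D → Prop) (f : D → ℝ) (s ε : ℝ) (hs : 0 < s) (hε : 0 < ε)
    (hsens : ∀ d d', Neighbor d d' → |f d - f d'| ≤ s) :
    ∀ d d', Neighbor d d' → ∀ S : Set ℝ, MeasurableSet S →
      (laplaceMeasure (s / ε)).map (fun z => f d + z) S ≤
        ENNReal.ofReal (Real.exp ε) *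
          (laplaceMeasure (s / ε)).map (fun z => f d' + z) S :=
  laplace_mechanism_dp_general Neighbor f s ε hε hsens
end

section
/- The Gaussian mechanism adding noise with standard deviation (s/ε)·√(2 ln(1.25/δ)) to a real-valued function f with sensitivity s satisfies (ε, δ)-differential privacy, for ε ∈ (0,1). -/
open MeasureTheory ProbabilityTheory
open scoped NNReal
open Real Filter Set Topology
open scoped ENNReal

lemma mill (w t : ℝ) (hw : 0 < w) (ht : 0 < t) :
    ∫ x in Set.Ioi t, Real.exp (-x^2/(2*w)) ≤ w / t * Real.exp (-t^2/(2*w)) := by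
  have hderiv : ∀ x ∈ Set.Ici t,
      HasDerivAt (fun x => -w * Real.exp (-x^2/(2*w))) (x * Real.exp (-x^2/(2*w))) x := by
    intro x _
    have h1 : HasDerivAt (fun x : ℝ => -x^2/(2*w)) (-(2*x)/(2*w)) x := by
      simpa using (((hasDerivAt_pow 2 x).neg).div_const (2*w))
    have h2 := (h1.exp).const_mul (-w)
    refine h2.congr_deriv ?_
    field_simp
  have htend : Filter.Tendsto (fun x => -w * Real.exp (-x^2/(2*w))) Filter.atTop (𝓝 0) := by
    have h0 : Filter.Tendsto (fun x : ℝ => -x^2/(2*w)) Filter.atTop Filter.atBot := by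
      apply Filter.Tendsto.atBot_div_const (by positivity)
      exact tendsto_neg_atBot_iff.mpr (tendsto_pow_atTop (by norm_num))
    have := (Real.tendsto_exp_atBot.comp h0).const_mul (-w)
    simpa using this
  have hpos : ∀ x ∈ Set.Ioi t, 0 ≤ x * Real.exp (-x^2/(2*w)) := by
    intro x hx
    have : 0 < x := ht.trans hx
    positivity
  have hval := integral_Ioi_of_hasDerivAt_of_nonneg' hderiv hpos htend
  have hinton := integrableOn_Ioi_deriv_of_nonneg' hderiv hpos htend
  have hint1 : IntegrableOn (fun x => Real.exp (-x^2/(2*w))) (Set.Ioi t) := by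
    have : Integrable (fun x : ℝ => Real.exp (-(1/(2*w)) * x^2)) := integrable_exp_neg_mul_sq (by positivity)
    have := this.integrableOn (s := Set.Ioi t)
    convert this using 2 with x
    ring_nf
  calc ∫ x in Set.Ioi t, Real.exp (-x^2/(2*w))
      ≤ ∫ x in Set.Ioi t, (1/t) * (x * Real.exp (-x^2/(2*w))) := by
        apply setIntegral_mono_on hint1 (hinton.const_mul _) measurableSet_Ioi
        intro x hx
        have hxt : t < x := hx
        have he : 0 < Real.exp (-x^2/(2*w)) := Real.exp_pos _
        rw [← mul_assoc]
        have h1 : (1:ℝ) ≤ 1/t*x := by rw [div_mul_eq_mul_div, one_mul]; exact (one_le_div ht).mpr hxt.le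
        nlinarith
    _ = (1/t) * ∫ x in Set.Ioi t, x * Real.exp (-x^2/(2*w)) := by rw [integral_const_mul]
    _ = w / t * Real.exp (-t^2/(2*w)) := by rw [hval]; field_simp; ring
lemma gauss_symm (v : ℝ≥0) : (gaussianReal 0 v).map (fun x => -x) = gaussianReal 0 v := by
  have h := gaussianReal_map_const_mul (μ := 0) (v := v) (-1)
  have h2 : (⟨(-1:ℝ)^2, sq_nonneg _⟩ : ℝ≥0) = 1 := by ext; norm_num
  simp only [mul_zero] at h
  rw [show (NNReal.mk ((-1:ℝ)^2) (sq_nonneg _)) = 1 from h2, one_mul] at h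
  have h3 : (fun x : ℝ => -x) = (fun x : ℝ => (-1) * x) := by funext x; ring
  rw [h3]
  exact h

lemma gauss_Iio (v : ℝ≥0) (y : ℝ) :
    gaussianReal 0 v (Set.Iio y) = gaussianReal 0 v (Set.Ioi (-y)) := by
  conv_lhs => rw [← gauss_symm v]
  rw [Measure.map_apply measurable_neg measurableSet_Iio]
  congr 1
  ext x
  simp [neg_lt]

lemma gauss_Ioi_zero (v : ℝ≥0) : gaussianReal 0 v (Set.Ioi 0) ≤ ENNReal.ofReal (1/2) := by
  by_contra hcon
  push_neg at hcon
  have h1 : gaussianReal 0 v (Set.Iio 0) = gaussianReal 0 v (Set.Ioi 0) := by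
    rw [gauss_Iio]; norm_num
  have hd : Disjoint (Set.Ioi (0:ℝ)) (Set.Iio 0) := by
    rw [Set.disjoint_left]
    intro x h1 h2
    exact lt_asymm (Set.mem_Ioi.mp h1) (Set.mem_Iio.mp h2)
  have h2 : gaussianReal 0 v (Set.Ioi 0) + gaussianReal 0 v (Set.Iio 0) ≤ 1 := by
    rw [← measure_union hd measurableSet_Iio]
    exact (measure_mono (Set.subset_univ _)).trans_eq measure_univ
  rw [h1] at h2
  have : (1:ℝ≥0∞) < 1 := by
    calc (1:ℝ≥0∞) = ENNReal.ofReal (1/2) + ENNReal.ofReal (1/2) := by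
          rw [← ENNReal.ofReal_add (by norm_num) (by norm_num)]; norm_num
      _ < gaussianReal 0 v (Set.Ioi 0) + gaussianReal 0 v (Set.Ioi 0) :=
          ENNReal.add_lt_add hcon hcon
      _ ≤ 1 := h2
  exact absurd this (lt_irrefl _)

lemma gauss_tail_pos {v : ℝ≥0} (hv : v ≠ 0) {a : ℝ} (ha : 0 < a) :
    gaussianReal 0 v (Set.Ioi a)
      ≤ ENNReal.ofReal ((Real.sqrt (2*π*v))⁻¹ * ((v:ℝ) / a * Real.exp (-a^2/(2*(v:ℝ))))) := by
  rw [gaussianReal_apply_eq_integral 0 hv]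
  apply ENNReal.ofReal_le_ofReal
  have hvpos : 0 < (v:ℝ) := by positivity
  have h1 : ∀ x : ℝ, gaussianPDFReal 0 v x = (Real.sqrt (2*π*v))⁻¹ * Real.exp (-x^2/(2*(v:ℝ))) := by
    intro x; rw [gaussianPDFReal]; norm_num
  calc ∫ x in Set.Ioi a, gaussianPDFReal 0 v x
      = (Real.sqrt (2*π*v))⁻¹ * ∫ x in Set.Ioi a, Real.exp (-x^2/(2*(v:ℝ))) := by
        simp_rw [h1]; rw [integral_const_mul]
    _ ≤ (Real.sqrt (2*π*v))⁻¹ * ((v:ℝ) / a * Real.exp (-a^2/(2*(v:ℝ)))) := by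
        apply mul_le_mul_of_nonneg_left (mill (v:ℝ) a hvpos ha) (by positivity)

lemma gauss_strip {v : ℝ≥0} (hv : v ≠ 0) {a : ℝ} (ha : a ≤ 0) :
    gaussianReal 0 v (Set.Ioc a 0) ≤ ENNReal.ofReal ((-a) * (Real.sqrt (2*π*v))⁻¹) := by
  rw [gaussianReal_apply_eq_integral 0 hv]
  apply ENNReal.ofReal_le_ofReal
  have hpdf : ∀ x : ℝ, gaussianPDFReal 0 v x ≤ (Real.sqrt (2*π*v))⁻¹ := by
    intro x
    rw [gaussianPDFReal]
    have hvpos : 0 < (v:ℝ) := by positivity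
    have : Real.exp (-(x-0)^2/(2*(v:ℝ))) ≤ 1 := by
      rw [Real.exp_le_one_iff]
      exact div_nonpos_of_nonpos_of_nonneg (by nlinarith [sq_nonneg (x-0)]) (by positivity)
    have hK : (0:ℝ) ≤ (Real.sqrt (2*π*v))⁻¹ := by positivity
    calc (Real.sqrt (2*π*v))⁻¹ * Real.exp (-(x-0)^2/(2*(v:ℝ)))
        ≤ (Real.sqrt (2*π*v))⁻¹ * 1 := mul_le_mul_of_nonneg_left this hK
      _ = _ := mul_one _
  calc ∫ x in Set.Ioc a 0, gaussianPDFReal 0 v x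
      ≤ ∫ _x in Set.Ioc a 0, (Real.sqrt (2*π*v))⁻¹ := by
        apply setIntegral_mono_on ((integrable_gaussianPDFReal 0 v).integrableOn)
          (integrableOn_const (by simp [Real.volume_Ioc]))
          measurableSet_Ioc
        intro x _; exact hpdf x
    _ = (volume (Set.Ioc a 0)).toReal * (Real.sqrt (2*π*v))⁻¹ := by
        rw [setIntegral_const, smul_eq_mul]; rfl
    _ = (-a) * (Real.sqrt (2*π*v))⁻¹ := by
        rw [Real.volume_Ioc, ENNReal.toReal_ofReal (by linarith)]
        norm_num

lemma gauss_tail_any {v : ℝ≥0} (hv : v ≠ 0) (a : ℝ) :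
    gaussianReal 0 v (Set.Ioi a)
      ≤ ENNReal.ofReal (1/2 + (0 ⊔ (-a)) * (Real.sqrt (2*π*v))⁻¹) := by
  have hK : (0:ℝ) ≤ (Real.sqrt (2*π*v))⁻¹ := by positivity
  rcases le_or_gt 0 a with h | h
  · calc gaussianReal 0 v (Set.Ioi a) ≤ gaussianReal 0 v (Set.Ioi 0) :=
          measure_mono (fun x hx => lt_of_le_of_lt h hx)
      _ ≤ ENNReal.ofReal (1/2) := gauss_Ioi_zero v
      _ ≤ _ := ENNReal.ofReal_le_ofReal (by nlinarith [mul_nonneg (le_max_left 0 (-a)) hK])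
  · have hsplit : Set.Ioi a ⊆ Set.Ioc a 0 ∪ Set.Ioi 0 := by
      intro x hx
      rcases le_or_gt x 0 with h2 | h2
      · exact Or.inl ⟨hx, h2⟩
      · exact Or.inr h2
    calc gaussianReal 0 v (Set.Ioi a)
        ≤ gaussianReal 0 v (Set.Ioc a 0) + gaussianReal 0 v (Set.Ioi 0) :=
          (measure_mono hsplit).trans (measure_union_le _ _)
      _ ≤ ENNReal.ofReal ((-a) * (Real.sqrt (2*π*v))⁻¹) + ENNReal.ofReal (1/2) :=
          add_le_add (gauss_strip hv h.le) (gauss_Ioi_zero v)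
      _ ≤ _ := by
          rw [← ENNReal.ofReal_add (by nlinarith) (by norm_num)]
          apply ENNReal.ofReal_le_ofReal
          have : -a ≤ 0 ⊔ (-a) := le_max_right _ _
          nlinarith

lemma sqrt_two_pi_ge : (5/2:ℝ) ≤ Real.sqrt (2*π) := by
  have h : (5/2:ℝ)^2 ≤ 2*π := by nlinarith [Real.pi_gt_d6]
  nlinarith [Real.sq_sqrt (show (0:ℝ) ≤ 2*π by positivity), Real.sqrt_nonneg (2*π)]

lemma caseA_arith (L u b ε δ : ℝ) (hL0 : 0 < L) (hu2 : u^2 = 2*L)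
    (hδeq : δ = 5/4 * Real.exp (-L)) (hε : 0 < ε) (hε1 : ε < 1)
    (hbu : b * u = u^2 - ε/2) (hb : (27/50) ≤ b) :
    Real.exp (-(b^2/2)) ≤ δ * (Real.sqrt (2*π) * b) := by
  have h2π := sqrt_two_pi_ge
  have hbsq : u^2 - ε ≤ b^2 := by
    have h1 : b^2 * u^2 = (u^2 - ε/2)^2 := by rw [← mul_pow, hbu]
    nlinarith [sq_nonneg ε, sq_nonneg u]
  have hexpb : Real.exp (-(b^2/2)) ≤ Real.exp (-L) * (2061/1250) := by
    have h1 : -(b^2/2) ≤ -L + 1/2 := by nlinarith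
    have h2 : Real.exp (-(b^2/2)) ≤ Real.exp (-L + 1/2) := Real.exp_le_exp.mpr h1
    rw [Real.exp_add] at h2
    have h3 : Real.exp (1/2:ℝ) ≤ (2061/1250) := by
      have h4 : Real.exp (1/2:ℝ) * Real.exp (1/2:ℝ) = Real.exp 1 := by
        rw [← Real.exp_add]; norm_num
      nlinarith [Real.exp_one_lt_d9, Real.exp_pos (1/2:ℝ)]
    nlinarith [Real.exp_pos (-L)]
  have hfinal : (27/16) * Real.exp (-L) ≤ δ * (Real.sqrt (2*π) * b) := by
    rw [hδeq]
    nlinarith [Real.exp_pos (-L), mul_le_mul h2π hb (by norm_num) (by linarith)]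
  nlinarith [Real.exp_pos (-L)]

lemma caseB_arith (L u σ b ε δ : ℝ) (hL : 1/5 ≤ L) (hu2 : u^2 = 2*L) (hu0 : 0 < u)
    (hσ : 0 < σ) (hδeq : δ = 5/4 * Real.exp (-L)) (hε : 0 < ε) (hε1 : ε < 1)
    (hbu : b * u = u^2 - ε/2) (hb : b < (27/50)) :
    1/2 + (0 ⊔ (-(σ*b))) * (Real.sqrt (2*π) * σ)⁻¹ ≤ δ := by
  have h2π := sqrt_two_pi_ge
  have hu632 : (79/125) ≤ u := by nlinarith
  have hub : u ≤ (1027/1000) := by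
    by_contra hcon
    push_neg at hcon
    nlinarith [mul_pos (show (0:ℝ) < u - 1027/1000 by linarith)
      (show (0:ℝ) < u + 487/1000 by linarith)]
  have hLsmall : L ≤ (66/125) := by nlinarith
  have hδbig : (59/100) ≤ δ := by
    have h1 : 1 - L ≤ Real.exp (-L) := by
      have := Real.add_one_le_exp (-L)
      linarith
    rw [hδeq]
    nlinarith
  have hnb : -b ≤ (1583/10000) := by
    have h1 : (-b) * u = ε/2 - u^2 := by nlinarith [hbu]
    have h2 : (-b) * u ≤ 1/10 := by nlinarith
    nlinarith
  have hmax : (0 ⊔ (-(σ*b))) ≤ σ * (1583/10000) := by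
    apply max_le (by positivity)
    have h : -(σ*b) = σ * (-b) := by ring
    rw [h]
    exact mul_le_mul_of_nonneg_left hnb hσ.le
  have hterm : (0 ⊔ (-(σ*b))) * (Real.sqrt (2*π) * σ)⁻¹ ≤ (317/5000) := by
    have h1 : (0 ⊔ (-(σ*b))) * (Real.sqrt (2*π) * σ)⁻¹ ≤ (σ * (1583/10000)) * (Real.sqrt (2*π) * σ)⁻¹ :=
      mul_le_mul_of_nonneg_right hmax (by positivity)
    have h2 : (σ * (1583/10000)) * (Real.sqrt (2*π) * σ)⁻¹ = (1583/10000) / Real.sqrt (2*π) := by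
      have h2πpos : 0 < Real.sqrt (2*π) := by linarith
      field_simp
    have h3 : (1583/10000) / Real.sqrt (2*π) ≤ (1583/10000) / (5/2) := by
      apply div_le_div_of_nonneg_left (by norm_num) (by norm_num) h2π
    calc (0 ⊔ (-(σ*b))) * (Real.sqrt (2*π) * σ)⁻¹ ≤ (1583/10000) / Real.sqrt (2*π) := by
          rw [← h2]; exact h1
      _ ≤ (1583/10000) / (5/2) := h3
      _ ≤ (317/5000) := by norm_num
  linarith

lemma tail_delta (s ε δ : ℝ) (hs : 0 < s) (hε : 0 < ε) (hε1 : ε < 1) (hδ : 0 < δ) (hδ1 : δ < 1) :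
    gaussianReal 0 ((((s/ε) * Real.sqrt (2 * Real.log (1.25/δ)))^2).toNNReal)
      (Set.Ioi ((((s/ε) * Real.sqrt (2 * Real.log (1.25/δ)))^2) * ε / s - s/2))
      ≤ ENNReal.ofReal δ := by
  set L : ℝ := Real.log (1.25/δ) with hLdef
  set u : ℝ := Real.sqrt (2*L) with hudef
  set σ : ℝ := (s/ε) * u with hσdef
  have hL : 1/5 ≤ L := by
    have h1 : Real.log (δ/1.25) ≤ δ/1.25 - 1 := Real.log_le_sub_one_of_pos (by positivity)
    have h2 : Real.log (δ/1.25) = -L := by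
      rw [hLdef, ← Real.log_inv]
      norm_num
    rw [h2] at h1
    norm_num at h1
    linarith
  have hL0 : 0 < L := by linarith
  have hu2 : u^2 = 2*L := Real.sq_sqrt (by linarith)
  have hu0 : 0 < u := Real.sqrt_pos.mpr (by linarith)
  have hσ : 0 < σ := by positivity
  have hδeq : δ = 5/4 * Real.exp (-L) := by
    have h : Real.exp L = 1.25/δ := Real.exp_log (by positivity)
    rw [Real.exp_neg, h]
    rw [show (1.25:ℝ) = 5/4 by norm_num]
    field_simp
  set v : ℝ≥0 := ((σ^2).toNNReal) with hvdef
  have hvco : ((v : ℝ)) = σ^2 := Real.coe_toNNReal _ (sq_nonneg σ)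
  have hv0 : v ≠ 0 := by
    intro h
    have h' : (v:ℝ) = 0 := by rw [h]; simp
    rw [hvco] at h'
    nlinarith
  have hsqrtv : Real.sqrt (2*π*(v:ℝ)) = Real.sqrt (2*π) * σ := by
    rw [hvco, Real.sqrt_mul (by positivity), Real.sqrt_sq hσ.le]
  set b : ℝ := (u^2 - ε/2)/u with hbdef
  have hbu : b * u = u^2 - ε/2 := by
    rw [hbdef]; field_simp
  have ha : σ^2 * ε / s - s/2 = σ * b := by
    rw [hσdef, hbdef]
    field_simp
  rw [show (((s/ε) * Real.sqrt (2 * Real.log (1.25/δ)))^2) * ε / s - s/2 = σ * b by rw [← ha]]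
  clear_value v b σ u L
  rcases le_or_gt (27/50) b with hb | hb
  · -- Case A : Mill's bound
    have hb0 : 0 < b := by linarith
    have hapos : 0 < σ * b := by positivity
    refine (gauss_tail_pos hv0 hapos).trans (ENNReal.ofReal_le_ofReal ?_)
    have hb2 : (σ*b)^2/(2*(v:ℝ)) = b^2/2 := by
      rw [hvco]
      field_simp
    have hLHS : (Real.sqrt (2*π*(v:ℝ)))⁻¹ * ((v:ℝ) / (σ*b) * Real.exp (-(σ*b)^2/(2*(v:ℝ))))
        = Real.exp (-(b^2/2)) / (Real.sqrt (2*π) * b) := by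
      rw [show -(σ*b)^2/(2*(v:ℝ)) = -((σ*b)^2/(2*(v:ℝ))) by rw [neg_div], hb2, hsqrtv, hvco]
      have h2πpos : 0 < Real.sqrt (2*π) := by linarith [sqrt_two_pi_ge]
      field_simp
    rw [hLHS, div_le_iff₀ (by positivity <;> linarith [sqrt_two_pi_ge])]
    exact caseA_arith L u b ε δ hL0 hu2 hδeq hε hε1 hbu hb
  · -- Case B
    refine (gauss_tail_any hv0 (σ*b)).trans (ENNReal.ofReal_le_ofReal ?_)
    rw [hsqrtv]
    exact caseB_arith L u σ b ε δ hL hu2 hu0 hσ hδeq hε hε1 hbu hb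

lemma dp_core (μ₁ μ₂ : ℝ) (v : ℝ≥0) (hv : v ≠ 0) (ε δ : ℝ)
    (hbad : gaussianReal μ₁ v {x | Real.exp ε * gaussianPDFReal μ₂ v x < gaussianPDFReal μ₁ v x}
      ≤ ENNReal.ofReal δ)
    (S : Set ℝ) (hS : MeasurableSet S) :
    gaussianReal μ₁ v S ≤ ENNReal.ofReal (Real.exp ε) * gaussianReal μ₂ v S + ENNReal.ofReal δ := by
  set A := {x | Real.exp ε * gaussianPDFReal μ₂ v x < gaussianPDFReal μ₁ v x} with hAdef
  have hA : MeasurableSet A :=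
    measurableSet_lt ((measurable_gaussianPDFReal μ₂ v).const_mul _) (measurable_gaussianPDFReal μ₁ v)
  have hsplit : gaussianReal μ₁ v S
      = gaussianReal μ₁ v (S ∩ Aᶜ) + gaussianReal μ₁ v (S \ Aᶜ) :=
    (measure_inter_add_diff S hA.compl).symm
  have h1 : gaussianReal μ₁ v (S \ Aᶜ) ≤ ENNReal.ofReal δ := by
    refine le_trans (measure_mono ?_) hbad
    intro x hx
    exact not_not.mp hx.2
  have h2 : gaussianReal μ₁ v (S ∩ Aᶜ) ≤ ENNReal.ofReal (Real.exp ε) * gaussianReal μ₂ v S := by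
    rw [gaussianReal_apply _ hv, gaussianReal_apply _ hv]
    calc ∫⁻ x in S ∩ Aᶜ, gaussianPDF μ₁ v x
        ≤ ∫⁻ x in S ∩ Aᶜ, ENNReal.ofReal (Real.exp ε) * gaussianPDF μ₂ v x := by
          apply setLIntegral_mono ((measurable_gaussianPDF μ₂ v).const_mul _)
          intro x hx
          have hxA : ¬ (Real.exp ε * gaussianPDFReal μ₂ v x < gaussianPDFReal μ₁ v x) := hx.2
          rw [gaussianPDF, gaussianPDF, ← ENNReal.ofReal_mul (Real.exp_pos ε).le]
          exact ENNReal.ofReal_le_ofReal (not_lt.mp hxA)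
      _ = ENNReal.ofReal (Real.exp ε) * ∫⁻ x in S ∩ Aᶜ, gaussianPDF μ₂ v x :=
          lintegral_const_mul _ (measurable_gaussianPDF μ₂ v)
      _ ≤ ENNReal.ofReal (Real.exp ε) * ∫⁻ x in S, gaussianPDF μ₂ v x :=
          mul_le_mul_right (lintegral_mono_set Set.inter_subset_left) _
  rw [hsplit]
  exact add_le_add h2 h1

lemma bad_le (μ₁ μ₂ s ε δ : ℝ) (hs : 0 < s) (hε : 0 < ε) (hε1 : ε < 1)
    (hδ : 0 < δ) (hδ1 : δ < 1) (hsens : |μ₁ - μ₂| ≤ s) :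
    gaussianReal μ₁ ((((s/ε) * Real.sqrt (2 * Real.log (1.25/δ)))^2).toNNReal)
      {x | Real.exp ε * gaussianPDFReal μ₂ ((((s/ε) * Real.sqrt (2 * Real.log (1.25/δ)))^2).toNNReal) x
        < gaussianPDFReal μ₁ ((((s/ε) * Real.sqrt (2 * Real.log (1.25/δ)))^2).toNNReal) x}
      ≤ ENNReal.ofReal δ := by
  set v : ℝ≥0 := (((s/ε) * Real.sqrt (2 * Real.log (1.25/δ)))^2).toNNReal with hvdef
  have hL : 0 < Real.log (1.25/δ) := Real.log_pos (by rw [lt_div_iff₀ hδ]; linarith)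
  have hvco : (v:ℝ) = ((s/ε) * Real.sqrt (2 * Real.log (1.25/δ)))^2 :=
    Real.coe_toNNReal _ (sq_nonneg _)
  have hvpos : 0 < (v:ℝ) := by
    rw [hvco]
    have h1 : 0 < Real.sqrt (2 * Real.log (1.25/δ)) := Real.sqrt_pos.mpr (by linarith)
    positivity
  have hv : v ≠ 0 := by
    intro h
    rw [h] at hvpos
    simp at hvpos
  set c : ℝ := μ₁ - μ₂ with hcdef
  set A := {x | Real.exp ε * gaussianPDFReal μ₂ v x < gaussianPDFReal μ₁ v x} with hAdef
  have hA : MeasurableSet A :=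
    measurableSet_lt ((measurable_gaussianPDFReal μ₂ v).const_mul _) (measurable_gaussianPDFReal μ₁ v)
  clear_value c v
  -- move to centered gaussian
  have hmap : gaussianReal μ₁ v = (gaussianReal 0 v).map (fun z => μ₁ + z) := by
    have := gaussianReal_map_const_add (μ := 0) (v := v) μ₁
    rw [zero_add] at this
    rw [← this]
  have hpre : (fun z => μ₁ + z) ⁻¹' A = {z | (v:ℝ)*ε - c^2/2 < c * z} := by
    ext z
    simp only [Set.mem_preimage, hAdef, Set.mem_setOf_eq]
    rw [gaussianPDFReal, gaussianPDFReal]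
    have hK : 0 < (Real.sqrt (2*π*(v:ℝ)))⁻¹ := by positivity
    have e0 : μ₁ + z - μ₁ = z := by ring
    have e1 : μ₁ + z - μ₂ = z + c := by rw [hcdef]; ring
    rw [e0, e1]
    rw [mul_comm (Real.exp ε) _, mul_assoc, ← Real.exp_add]
    rw [mul_lt_mul_iff_right₀ hK, Real.exp_lt_exp]
    have h2v : (2*(v:ℝ)) ≠ 0 := by positivity
    have e2 : (-(z+c)^2/(2*(v:ℝ)) + ε) * (2*(v:ℝ)) = 2*(v:ℝ)*ε - (z+c)^2 := by
      rw [add_mul, div_mul_cancel₀ _ h2v]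
      ring
    have e3 : (-z^2/(2*(v:ℝ))) * (2*(v:ℝ)) = -z^2 := div_mul_cancel₀ _ h2v
    have hexpand : (z+c)^2 = z^2 + 2*c*z + c^2 := by ring
    constructor
    · intro h
      have h2 := mul_lt_mul_of_pos_right h (show (0:ℝ) < 2*(v:ℝ) by positivity)
      rw [e2, e3] at h2
      nlinarith
    · intro h
      have h2 : (-(z+c)^2/(2*(v:ℝ)) + ε) * (2*(v:ℝ)) < (-z^2/(2*(v:ℝ))) * (2*(v:ℝ)) := by
        rw [e2, e3]
        nlinarith
      exact lt_of_mul_lt_mul_right h2 (by positivity)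
  rw [hmap, Measure.map_apply (by fun_prop) hA, hpre]
  -- now bound the centered bad set
  rcases eq_or_ne c 0 with hc | hc
  · rw [hc]
    have : {z : ℝ | (v:ℝ)*ε - (0:ℝ)^2/2 < 0 * z} = ∅ := by
      ext z
      simp only [Set.mem_setOf_eq, Set.mem_empty_iff_false, iff_false, not_lt, zero_mul]
      nlinarith
    rw [this]
    simp
  · have hcabs : 0 < |c| := abs_pos.mpr hc
    have hcs : |c| ≤ s := hsens
    have hkey : (v:ℝ) * ε / s - s/2 ≤ ((v:ℝ)*ε - c^2/2) / |c| := by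
      rw [le_div_iff₀ hcabs]
      apply le_of_mul_le_mul_right _ hs
      have h4 : ((v:ℝ) * ε / s - s/2) * |c| * s = (v:ℝ)*ε * |c| - s^2 * |c|/2 := by
        field_simp
      rw [h4]
      have h1 : 0 ≤ (v:ℝ)*ε*(s - |c|) := mul_nonneg (by positivity) (by linarith)
      have h2 : 0 ≤ s * |c| * (s - |c|) :=
        mul_nonneg (mul_nonneg hs.le (abs_nonneg c)) (by linarith)
      have h3 : c^2 = |c|^2 := (sq_abs c).symm
      nlinarith
    have htail : gaussianReal 0 v (Set.Ioi ((v:ℝ) * ε / s - s/2)) ≤ ENNReal.ofReal δ := by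
      have h := tail_delta s ε δ hs hε hε1 hδ hδ1
      rw [← hvco, Real.toNNReal_coe] at h
      exact h
    rcases lt_or_gt_of_ne hc with hcneg | hcpos
    · have hset : {z : ℝ | (v:ℝ)*ε - c^2/2 < c * z} = Set.Iio (((v:ℝ)*ε - c^2/2)/c) := by
        ext z
        simp only [Set.mem_setOf_eq, Set.mem_Iio]
        rw [lt_div_iff_of_neg hcneg, mul_comm z c]
      rw [hset, gauss_Iio]
      have hneg : -((((v:ℝ)*ε - c^2/2))/c) = (((v:ℝ)*ε - c^2/2)) / |c| := by
        rw [abs_of_neg hcneg]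
        field_simp
      rw [hneg]
      exact le_trans (measure_mono (Set.Ioi_subset_Ioi hkey)) htail
    · have hset : {z : ℝ | (v:ℝ)*ε - c^2/2 < c * z} = Set.Ioi (((v:ℝ)*ε - c^2/2)/c) := by
        ext z
        simp only [Set.mem_setOf_eq, Set.mem_Ioi]
        rw [div_lt_iff₀ hcpos, mul_comm z c]
      rw [hset]
      have habs : (((v:ℝ)*ε - c^2/2))/c = (((v:ℝ)*ε - c^2/2)) / |c| := by
        rw [abs_of_pos hcpos]
      rw [habs]
      exact le_trans (measure_mono (Set.Ioi_subset_Ioi hkey)) htail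

/-- the Gaussian mechanism `d ↦ f(d) + Z` with
`Z ∼ N(0, σ²)`, `σ = (s/ε)·√(2 ln(1.25/δ))`, applied to a function `f` of
sensitivity `s`, satisfies `(ε, δ)`-differential privacy for `ε ∈ (0,1)`. -/
theorem gaussian_mechanism_dp {D : Type*}
    (Neighbor : D → D → Prop) (f : D → ℝ) (s ε δ : ℝ)
    (hs : 0 < s) (hε : 0 < ε) (hε1 : ε < 1) (hδ : 0 < δ) (hδ1 : δ < 1)
    (hsens : ∀ d d', Neighbor d d' → |f d - f d'| ≤ s) :
    ∀ d d', Neighbor d d' → ∀ S : Set ℝ, MeasurableSet S →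
      (gaussianReal 0 ((((s / ε) * Real.sqrt (2 * Real.log (1.25 / δ))) ^ 2).toNNReal)).map
          (fun z => f d + z) S ≤
        ENNReal.ofReal (Real.exp ε) *
          (gaussianReal 0 ((((s / ε) * Real.sqrt (2 * Real.log (1.25 / δ))) ^ 2).toNNReal)).map
            (fun z => f d' + z) S + ENNReal.ofReal δ := by
  intro d d' hN S hS
  set v : ℝ≥0 := (((s / ε) * Real.sqrt (2 * Real.log (1.25 / δ))) ^ 2).toNNReal with hvdef
  have hmap : ∀ y : ℝ, (gaussianReal 0 v).map (fun z => y + z) = gaussianReal y v := by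
    intro y
    have h := gaussianReal_map_const_add (μ := 0) (v := v) y
    rw [zero_add] at h
    exact h
  have hL : 0 < Real.log (1.25/δ) := Real.log_pos (by rw [lt_div_iff₀ hδ]; linarith)
  have hv' : v ≠ 0 := by
    rw [hvdef]
    have h1 : 0 < Real.sqrt (2 * Real.log (1.25/δ)) := Real.sqrt_pos.mpr (by linarith)
    have h2 : 0 < ((s/ε) * Real.sqrt (2*Real.log (1.25/δ)))^2 :=
      pow_pos (mul_pos (div_pos hs hε) h1) 2
    simp only [ne_eq, Real.toNNReal_eq_zero, not_le]
    exact h2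
  rw [hmap (f d), hmap (f d')]
  exact dp_core (f d) (f d') v hv' ε δ
    (bad_le (f d) (f d') s ε δ hs hε hε1 hδ hδ1 (hsens d d' hN)) S hS
end

section
/- Adaptive stream block composition satisfies (ε_g, δ_g)-differential privacy provided the per-block access control ensures that for every block k, the sum of privacy parameters εᵢ(v_{<i}) over all rounds i whose block set contains k is at most ε_g, and the corresponding sum of δᵢ(v_{<i}) is at most δ_g. -/
open scoped BigOperators ENNReal

/-- The prefix (history) of an outcome vector `v` strictly before round `i`. -/
def hist {V : Type*} {r : ℕ} (v : Fin r → V) (i : Fin r) : Fin i → V :=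
  fun j => v ⟨j, j.isLt.trans i.isLt⟩

private lemma hist_snoc {V : Type*} {r : ℕ} (h : Fin r → V) (x : V) (i : Fin r) :
    hist (Fin.snoc h x) i.castSucc = hist h i := by
  funext j
  exact Fin.snoc_castSucc (α := fun _ => V) x h ⟨j, j.isLt.trans i.isLt⟩

private lemma hist_snoc_last {V : Type*} {r : ℕ} (h : Fin r → V) (x : V) :
    hist (Fin.snoc h x) (Fin.last r) = h := by
  funext j
  exact Fin.snoc_castSucc (α := fun _ => V) x h j

/-- Splitting an `(r+1)`-tuple into its initial segment and last entry. -/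
private def snocEquiv' (V : Type*) (r : ℕ) : (Fin r → V) × V ≃ (Fin (r + 1) → V) where
  toFun p := Fin.snoc p.1 p.2
  invFun v := (Fin.init v, v (Fin.last r))
  left_inv p := by simp
  right_inv v := by simp

private lemma snocEquiv'_apply {V : Type*} {r : ℕ} (h : Fin r → V) (x : V) :
    snocEquiv' V r (h, x) = Fin.snoc h x := rfl

/-- The joint law of the adaptive interaction is a probability distribution. -/
private lemma joint_norm {V : Type*} :
    ∀ (r : ℕ) (P : (i : Fin r) → (Fin i → V) → PMF V),
      ∑' v : Fin r → V, ∏ i, P i (hist v i) (v i) = 1 := by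
  intro r
  induction r with
  | zero =>
    intro P
    rw [tsum_eq_single (fun i : Fin 0 => i.elim0)]
    · simp
    · intro b hb; exact absurd (funext fun i => i.elim0) hb
  | succ r ih =>
    intro P
    set e := snocEquiv' V r with he
    have hconv : ∀ (G : (Fin (r+1) → V) → ℝ≥0∞),
        ∑' v : Fin (r+1) → V, G v = ∑' (h : Fin r → V) (x : V), G (e (h, x)) := by
      intro G
      rw [← Equiv.tsum_eq e G]
      exact ENNReal.tsum_prod (f := fun h x => G (e (h, x)))
    have hrw : ∀ (h : Fin r → V) (x : V),
        (∏ i : Fin (r+1), P i (hist (e (h, x)) i) ((e (h, x)) i)) =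
          (∏ i : Fin r, P i.castSucc (hist h i) (h i)) * P (Fin.last r) h x := by
      intro h x
      have hsnoc : e (h, x) = Fin.snoc h x := by rw [he]; exact snocEquiv'_apply h x
      rw [hsnoc, Fin.prod_univ_castSucc]
      congr 1
      · refine Finset.prod_congr rfl fun i _ => ?_
        rw [hist_snoc, Fin.snoc_castSucc]
      · rw [hist_snoc_last, Fin.snoc_last]
    calc ∑' v : Fin (r+1) → V, ∏ i : Fin (r+1), P i (hist v i) (v i)
        = ∑' (h : Fin r → V) (x : V),
            ∏ i : Fin (r+1), P i (hist (e (h, x)) i) ((e (h, x)) i) :=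
          hconv (fun v => ∏ i : Fin (r+1), P i (hist v i) (v i))
      _ = ∑' (h : Fin r → V), ∑' (x : V),
            (∏ i : Fin r, P i.castSucc (hist h i) (h i)) * P (Fin.last r) h x := by
          refine tsum_congr fun h => tsum_congr fun x => hrw h x
      _ = ∑' (h : Fin r → V), (∏ i : Fin r, P i.castSucc (hist h i) (h i)) := by
          refine tsum_congr fun h => ?_
          rw [ENNReal.tsum_mul_left, (P (Fin.last r) h).tsum_coe, mul_one]
      _ = 1 := ih (fun i h => P i.castSucc h)

/-- Adaptive union bound: the probability that some round lands in its bad set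
is at most the expected sum of the per-round bounds. -/
private lemma star_lemma {V : Type*} :
    ∀ (r : ℕ) (P : (i : Fin r) → (Fin i → V) → PMF V)
      (bad : (i : Fin r) → (Fin i → V) → Set V)
      (d : (i : Fin r) → (Fin i → V) → ℝ≥0∞),
      (∀ i h, ∑' x, (bad i h).indicator (P i h) x ≤ d i h) →
      (∑' v : Fin r → V, (∏ i, P i (hist v i) (v i)) *
          Set.indicator {v : Fin r → V | ∃ i, v i ∈ bad i (hist v i)} (fun _ => 1) v)
        ≤ ∑' v : Fin r → V, (∏ i, P i (hist v i) (v i)) * ∑ i, d i (hist v i) := by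
  intro r
  induction r with
  | zero =>
    intro P bad d hd
    have : ∀ v : Fin 0 → V,
        Set.indicator {v : Fin 0 → V | ∃ i, v i ∈ bad i (hist v i)} (fun _ => (1:ℝ≥0∞)) v = 0 := by
      intro v
      apply Set.indicator_of_notMem
      rintro ⟨i, -⟩
      exact i.elim0
    simp only [this, mul_zero, tsum_zero]
    exact zero_le
  | succ r ih =>
    intro P bad d hd
    set e := snocEquiv' V r with he
    have hsnoc : ∀ (h : Fin r → V) (x : V), e (h, x) = Fin.snoc h x := fun h x => by rw [he]; exact snocEquiv'_apply h x
    have hconv : ∀ (G : (Fin (r+1) → V) → ℝ≥0∞),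
        ∑' v : Fin (r+1) → V, G v = ∑' (h : Fin r → V) (x : V), G (e (h, x)) := by
      intro G
      rw [← Equiv.tsum_eq e G]
      exact ENNReal.tsum_prod (f := fun h x => G (e (h, x)))
    set F : (Fin r → V) → ℝ≥0∞ := fun h => ∏ i : Fin r, P i.castSucc (hist h i) (h i) with hF
    have hprod : ∀ (h : Fin r → V) (x : V),
        (∏ i : Fin (r+1), P i (hist (e (h, x)) i) ((e (h, x)) i)) =
          F h * P (Fin.last r) h x := by
      intro h x
      rw [hsnoc, Fin.prod_univ_castSucc, hF]
      congr 1
      · refine Finset.prod_congr rfl fun i _ => ?_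
        rw [hist_snoc, Fin.snoc_castSucc]
      · rw [hist_snoc_last, Fin.snoc_last]
    -- indicator splitting
    have key : ∀ (h : Fin r → V) (x : V),
        Set.indicator {v : Fin (r+1) → V | ∃ i, v i ∈ bad i (hist v i)} (fun _ => (1:ℝ≥0∞))
            (e (h, x))
          ≤ Set.indicator {h : Fin r → V | ∃ i : Fin r, h i ∈ bad i.castSucc (hist h i)}
              (fun _ => (1:ℝ≥0∞)) h
            + Set.indicator (bad (Fin.last r) h) (fun _ => (1:ℝ≥0∞)) x := by
      intro h x
      by_cases hm : e (h, x) ∈ {v : Fin (r+1) → V | ∃ i, v i ∈ bad i (hist v i)}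
      · rw [Set.indicator_of_mem hm]
        obtain ⟨i, hi⟩ := hm
        induction i using Fin.lastCases with
        | last =>
          rw [hsnoc, Fin.snoc_last, hist_snoc_last] at hi
          have : Set.indicator (bad (Fin.last r) h) (fun _ => (1:ℝ≥0∞)) x = 1 :=
            Set.indicator_of_mem hi _
          rw [this]
          exact le_add_self
        | cast j =>
          rw [hsnoc, Fin.snoc_castSucc, hist_snoc] at hi
          have : Set.indicator {h : Fin r → V | ∃ i : Fin r, h i ∈ bad i.castSucc (hist h i)}
              (fun _ => (1:ℝ≥0∞)) h = 1 :=
            Set.indicator_of_mem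
              (show h ∈ {h : Fin r → V | ∃ i : Fin r, h i ∈ bad i.castSucc (hist h i)}
                from ⟨j, hi⟩) _
          rw [this]
          exact le_add_right le_rfl
      · rw [Set.indicator_of_notMem hm]
        exact zero_le
    have hRHS : ∀ h : Fin r → V,
        (∑' x : V, (∏ i : Fin (r+1), P i (hist (e (h, x)) i) ((e (h, x)) i)) *
            ∑ i : Fin (r+1), d i (hist (e (h, x)) i))
          = F h * (∑ i : Fin r, d i.castSucc (hist h i)) + F h * d (Fin.last r) h := by
      intro h
      have hdsum : ∀ x : V, (∑ i : Fin (r+1), d i (hist (e (h, x)) i)) =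
          (∑ i : Fin r, d i.castSucc (hist h i)) + d (Fin.last r) h := by
        intro x
        rw [hsnoc, Fin.sum_univ_castSucc]
        congr 1
        · exact Finset.sum_congr rfl fun i _ => by rw [hist_snoc]
        · rw [hist_snoc_last]
      calc (∑' x : V, (∏ i : Fin (r+1), P i (hist (e (h, x)) i) ((e (h, x)) i)) *
              ∑ i : Fin (r+1), d i (hist (e (h, x)) i))
          = ∑' x : V, F h * P (Fin.last r) h x *
              ((∑ i : Fin r, d i.castSucc (hist h i)) + d (Fin.last r) h) := by
            exact tsum_congr fun x => by rw [hprod, hdsum]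
        _ = F h * ((∑ i : Fin r, d i.castSucc (hist h i)) + d (Fin.last r) h) := by
            rw [ENNReal.tsum_mul_right, ENNReal.tsum_mul_left,
              (P (Fin.last r) h).tsum_coe, mul_one]
        _ = F h * (∑ i : Fin r, d i.castSucc (hist h i)) + F h * d (Fin.last r) h := by
            rw [mul_add]
    have hLHS : ∀ h : Fin r → V,
        (∑' x : V, (∏ i : Fin (r+1), P i (hist (e (h, x)) i) ((e (h, x)) i)) *
            Set.indicator {v : Fin (r+1) → V | ∃ i, v i ∈ bad i (hist v i)}
              (fun _ => (1:ℝ≥0∞)) (e (h, x)))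
          ≤ F h * Set.indicator {h : Fin r → V | ∃ i : Fin r, h i ∈ bad i.castSucc (hist h i)}
              (fun _ => (1:ℝ≥0∞)) h
            + F h * d (Fin.last r) h := by
      intro h
      calc (∑' x : V, (∏ i : Fin (r+1), P i (hist (e (h, x)) i) ((e (h, x)) i)) *
              Set.indicator {v : Fin (r+1) → V | ∃ i, v i ∈ bad i (hist v i)}
                (fun _ => (1:ℝ≥0∞)) (e (h, x)))
          ≤ ∑' x : V, F h * P (Fin.last r) h x *
              (Set.indicator {h : Fin r → V | ∃ i : Fin r, h i ∈ bad i.castSucc (hist h i)}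
                  (fun _ => (1:ℝ≥0∞)) h
                + Set.indicator (bad (Fin.last r) h) (fun _ => (1:ℝ≥0∞)) x) := by
            refine ENNReal.tsum_le_tsum fun x => ?_
            rw [hprod]
            exact mul_le_mul_right (key h x) _
        _ = F h * Set.indicator {h : Fin r → V | ∃ i : Fin r, h i ∈ bad i.castSucc (hist h i)}
              (fun _ => (1:ℝ≥0∞)) h * (∑' x : V, P (Fin.last r) h x)
            + F h * ∑' x : V, (bad (Fin.last r) h).indicator (P (Fin.last r) h) x := by
            simp only [mul_add]
            rw [ENNReal.tsum_add]
            congr 1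
            · rw [← ENNReal.tsum_mul_left]
              exact tsum_congr fun x => by ring
            · rw [← ENNReal.tsum_mul_left]
              refine tsum_congr fun x => ?_
              rw [mul_assoc]
              congr 1
              by_cases hx : x ∈ bad (Fin.last r) h
              · rw [Set.indicator_of_mem hx, Set.indicator_of_mem hx, mul_one]
              · rw [Set.indicator_of_notMem hx, Set.indicator_of_notMem hx, mul_zero]
        _ ≤ F h * Set.indicator {h : Fin r → V | ∃ i : Fin r, h i ∈ bad i.castSucc (hist h i)}
              (fun _ => (1:ℝ≥0∞)) h + F h * d (Fin.last r) h := by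
            rw [(P (Fin.last r) h).tsum_coe, mul_one]
            exact add_le_add_right (mul_le_mul_right (hd (Fin.last r) h) _) _
    calc (∑' v : Fin (r+1) → V, (∏ i : Fin (r+1), P i (hist v i) (v i)) *
            Set.indicator {v : Fin (r+1) → V | ∃ i, v i ∈ bad i (hist v i)}
              (fun _ => (1:ℝ≥0∞)) v)
        = ∑' (h : Fin r → V) (x : V),
            (∏ i : Fin (r+1), P i (hist (e (h, x)) i) ((e (h, x)) i)) *
              Set.indicator {v : Fin (r+1) → V | ∃ i, v i ∈ bad i (hist v i)}
                (fun _ => (1:ℝ≥0∞)) (e (h, x)) :=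
          hconv (fun v => (∏ i : Fin (r+1), P i (hist v i) (v i)) *
            Set.indicator {v : Fin (r+1) → V | ∃ i, v i ∈ bad i (hist v i)}
              (fun _ => (1:ℝ≥0∞)) v)
      _ ≤ ∑' (h : Fin r → V),
            (F h * Set.indicator {h : Fin r → V | ∃ i : Fin r, h i ∈ bad i.castSucc (hist h i)}
              (fun _ => (1:ℝ≥0∞)) h + F h * d (Fin.last r) h) :=
          ENNReal.tsum_le_tsum fun h => hLHS h
      _ = (∑' (h : Fin r → V), F h *
            Set.indicator {h : Fin r → V | ∃ i : Fin r, h i ∈ bad i.castSucc (hist h i)}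
              (fun _ => (1:ℝ≥0∞)) h)
          + ∑' (h : Fin r → V), F h * d (Fin.last r) h := ENNReal.tsum_add
      _ ≤ (∑' (h : Fin r → V), F h * ∑ i : Fin r, d i.castSucc (hist h i))
          + ∑' (h : Fin r → V), F h * d (Fin.last r) h := by
          refine add_le_add_left ?_ _
          exact ih (fun i h => P i.castSucc h) (fun i h => bad i.castSucc h)
            (fun i h => d i.castSucc h) (fun i h => hd i.castSucc h)
      _ = ∑' (h : Fin r → V) (x : V),
            (∏ i : Fin (r+1), P i (hist (e (h, x)) i) ((e (h, x)) i)) *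
              ∑ i : Fin (r+1), d i (hist (e (h, x)) i) := by
          rw [← ENNReal.tsum_add]
          exact (tsum_congr fun h => (hRHS h)).symm
      _ = ∑' v : Fin (r+1) → V, (∏ i : Fin (r+1), P i (hist v i) (v i)) *
            ∑ i : Fin (r+1), d i (hist v i) :=
          (hconv (fun v => (∏ i : Fin (r+1), P i (hist v i) (v i)) *
            ∑ i : Fin (r+1), d i (hist v i))).symm

/-- Basic Composition for Sage Block Composition.
An adaptive stream interaction over `r` rounds and `n` data blocks; the
adversary's change affects block `k`.  At round `i`, both the block set
`blocks i h`, the privacy parameters `ε i h, δ i h`, and the query itself are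
chosen adaptively from the history `h` of released outputs.  `P b i h` is the
conditional distribution of round `i`'s output given history `h` under
hypothesis `b` (future data blocks depend on `b` only through released outputs
and an exogenous world process, so conditioning on the history determines
them).  Hypotheses:
* rounds whose block set avoids block `k` have identical conditional laws under
  both hypotheses;
* each round is an `(ε i h, δ i h)`-DP query: its conditional privacy loss is
  bounded by `ε i h` except with probability `δ i h`;
* access control: along every outcome sequence, for every block `k'`, the sum
  of the `ε`'s (resp. `δ`'s) of the rounds using `k'` is at most `ε_g`
  (resp. `δ_g`).
Conclusion: the interaction is `(ε_g, δ_g)`-DP, i.e. with probability at least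
`1 − δ_g` over outcomes `v ∼ V⁰`, the total privacy loss is at most `ε_g`. -/
theorem adaptive_stream_block_composition {V : Type*} {r n : ℕ}
    (blocks : (i : Fin r) → (Fin i → V) → Finset (Fin n))
    (ε δ : (i : Fin r) → (Fin i → V) → ℝ)
    (P : Bool → (i : Fin r) → (Fin i → V) → PMF V)
    (k : Fin n) (ε_g δ_g : ℝ) (hεg : 0 ≤ ε_g) (hδg : 0 ≤ δ_g)
    (hεpos : ∀ i h, 0 ≤ ε i h) (hδpos : ∀ i h, 0 ≤ δ i h)
    (hsame : ∀ (i : Fin r) (h : Fin i → V), k ∉ blocks i h → P false i h = P true i h)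
    (hDP : ∀ (i : Fin r) (h : Fin i → V),
      (P false i h).toOuterMeasure
          {x | |Real.log ((P false i h x).toReal / (P true i h x).toReal)| ≤ ε i h} ≥
        1 - ENNReal.ofReal (δ i h))
    (haccess : ∀ (v : Fin r → V) (k' : Fin n),
      (∑ i ∈ Finset.univ.filter (fun i : Fin r => k' ∈ blocks i (hist v i)),
          ε i (hist v i)) ≤ ε_g ∧
      (∑ i ∈ Finset.univ.filter (fun i : Fin r => k' ∈ blocks i (hist v i)),
          δ i (hist v i)) ≤ δ_g) :
    (∑' v : {v : Fin r → V //
        ¬ |Real.log ((∏ i : Fin r, (P false i (hist v i) (v i)).toReal) /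
            (∏ i : Fin r, (P true i (hist v i) (v i)).toReal))| ≤ ε_g},
      ∏ i : Fin r, P false i (hist v.1 i) (v.1 i)) ≤ ENNReal.ofReal δ_g := by
  classical
  set B : Set (Fin r → V) := {v | ¬ |Real.log ((∏ i : Fin r, (P false i (hist v i) (v i)).toReal) /
      (∏ i : Fin r, (P true i (hist v i) (v i)).toReal))| ≤ ε_g} with hB
  set bad : (i : Fin r) → (Fin i → V) → Set V := fun i h =>
    {x | k ∈ blocks i h ∧ ¬ |Real.log ((P false i h x).toReal / (P true i h x).toReal)| ≤ ε i h}
    with hbad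
  set d : (i : Fin r) → (Fin i → V) → ℝ≥0∞ := fun i h =>
    if k ∈ blocks i h then ENNReal.ofReal (δ i h) else 0 with hd_def
  -- per-round bound
  have hd : ∀ (i : Fin r) (h : Fin i → V),
      ∑' x, (bad i h).indicator (P false i h) x ≤ d i h := by
    intro i h
    by_cases hk : k ∈ blocks i h
    · set G : Set V := {x | |Real.log ((P false i h x).toReal / (P true i h x).toReal)| ≤ ε i h}
      have hbadeq : bad i h = Gᶜ := by
        ext x; simp [hbad, hk, G]
      have hG : 1 - ENNReal.ofReal (δ i h) ≤ ∑' x, G.indicator (P false i h) x := by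
        have := hDP i h
        rwa [PMF.toOuterMeasure_apply] at this
      have hsum : (∑' x, G.indicator (P false i h) x) + ∑' x, Gᶜ.indicator (P false i h) x
          = 1 := by
        rw [← ENNReal.tsum_add]
        calc (∑' x, (G.indicator (P false i h) x + Gᶜ.indicator (P false i h) x))
            = ∑' x, P false i h x := by
              refine tsum_congr fun x => ?_
              exact congrFun (Set.indicator_self_add_compl G (P false i h)) x
          _ = 1 := (P false i h).tsum_coe
      have hGfin : (∑' x, G.indicator (P false i h) x) ≠ ∞ := by
        refine ne_top_of_le_ne_top ENNReal.one_ne_top ?_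
        calc (∑' x, G.indicator (P false i h) x) ≤ ∑' x, P false i h x :=
              ENNReal.tsum_le_tsum fun x => Set.indicator_le_self _ _ x
          _ = 1 := (P false i h).tsum_coe
      have h1 : (1:ℝ≥0∞) ≤ (∑' x, G.indicator (P false i h) x) + ENNReal.ofReal (δ i h) :=
        tsub_le_iff_right.mp hG
      have : (∑' x, G.indicator (P false i h) x) + ∑' x, Gᶜ.indicator (P false i h) x
          ≤ (∑' x, G.indicator (P false i h) x) + ENNReal.ofReal (δ i h) := by
        rw [hsum]; exact h1
      have hle : ∑' x, Gᶜ.indicator (P false i h) x ≤ ENNReal.ofReal (δ i h) :=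
        (ENNReal.add_le_add_iff_left hGfin).mp this
      rw [hbadeq, hd_def]
      simpa [hk] using hle
    · have hempty : bad i h = (∅ : Set V) := by
        ext x; simp [hbad, hk]
      rw [hempty, hd_def]
      simp [hk]
  -- pointwise domination of the bad event by the union of per-round bad events
  have hpt : ∀ v : Fin r → V,
      B.indicator (fun v => ∏ i : Fin r, P false i (hist v i) (v i)) v
        ≤ (∏ i : Fin r, P false i (hist v i) (v i)) *
          Set.indicator {v : Fin r → V | ∃ i, v i ∈ bad i (hist v i)} (fun _ => (1:ℝ≥0∞)) v := by
    intro v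
    by_cases hvB : v ∈ B
    · rw [Set.indicator_of_mem hvB]
      by_cases hex : v ∈ {v : Fin r → V | ∃ i, v i ∈ bad i (hist v i)}
      · rw [Set.indicator_of_mem hex, mul_one]
      · rw [Set.indicator_of_notMem hex, mul_zero]
        -- show the product is zero
        have hprod0 : (∏ i : Fin r, P false i (hist v i) (v i)) = 0 := by
          by_contra hne
          have hp : ∀ i : Fin r, P false i (hist v i) (v i) ≠ 0 := by
            intro i hi
            exact hne (Finset.prod_eq_zero (Finset.mem_univ i) hi)
          have hpR : ∀ i : Fin r, 0 < (P false i (hist v i) (v i)).toReal := fun i =>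
            ENNReal.toReal_pos (hp i) (PMF.apply_ne_top _ _)
          have hgood : ∀ i : Fin r, k ∈ blocks i (hist v i) →
              |Real.log ((P false i (hist v i) (v i)).toReal /
                (P true i (hist v i) (v i)).toReal)| ≤ ε i (hist v i) := by
            intro i hk
            by_contra hc
            exact hex ⟨i, ⟨hk, hc⟩⟩
          apply hvB
          by_cases hq : ∀ i : Fin r, (P true i (hist v i) (v i)).toReal ≠ 0
          · rw [← Finset.prod_div_distrib,
              Real.log_prod (fun i _ => div_ne_zero (hpR i).ne' (hq i))]
            have hne0 : ∀ i ∈ (Finset.univ : Finset (Fin r)),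
                Real.log ((P false i (hist v i) (v i)).toReal /
                  (P true i (hist v i) (v i)).toReal) ≠ 0 →
                k ∈ blocks i (hist v i) := by
              intro i _ hlog
              by_contra hk
              apply hlog
              rw [hsame i (hist v i) hk, div_self (hq i), Real.log_one]
            rw [← Finset.sum_filter_of_ne hne0]
            calc |∑ i ∈ Finset.univ.filter (fun i : Fin r => k ∈ blocks i (hist v i)),
                  Real.log ((P false i (hist v i) (v i)).toReal /
                    (P true i (hist v i) (v i)).toReal)|
                ≤ ∑ i ∈ Finset.univ.filter (fun i : Fin r => k ∈ blocks i (hist v i)),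
                  |Real.log ((P false i (hist v i) (v i)).toReal /
                    (P true i (hist v i) (v i)).toReal)| :=
                  Finset.abs_sum_le_sum_abs _ _
              _ ≤ ∑ i ∈ Finset.univ.filter (fun i : Fin r => k ∈ blocks i (hist v i)),
                  ε i (hist v i) := by
                  refine Finset.sum_le_sum fun i hi => ?_
                  exact hgood i (Finset.mem_filter.mp hi).2
              _ ≤ ε_g := (haccess v k).1
          · push_neg at hq
            obtain ⟨j, hj⟩ := hq
            have : (∏ i : Fin r, (P true i (hist v i) (v i)).toReal) = 0 :=
              Finset.prod_eq_zero (Finset.mem_univ j) hj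
            rw [this, div_zero, Real.log_zero, abs_zero]
            exact hεg
        rw [hprod0]
    · rw [Set.indicator_of_notMem hvB]
      exact zero_le
  -- the expected sum of the `d`'s is at most `δ_g`
  have hdsum : ∀ v : Fin r → V, (∑ i : Fin r, d i (hist v i)) ≤ ENNReal.ofReal δ_g := by
    intro v
    have : (∑ i : Fin r, d i (hist v i)) =
        ∑ i ∈ Finset.univ.filter (fun i : Fin r => k ∈ blocks i (hist v i)),
          ENNReal.ofReal (δ i (hist v i)) := by
      rw [Finset.sum_filter]
    rw [this, ← ENNReal.ofReal_sum_of_nonneg (fun i _ => hδpos i (hist v i))]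
    exact ENNReal.ofReal_le_ofReal (haccess v k).2
  calc (∑' v : {v : Fin r → V //
        ¬ |Real.log ((∏ i : Fin r, (P false i (hist v i) (v i)).toReal) /
            (∏ i : Fin r, (P true i (hist v i) (v i)).toReal))| ≤ ε_g},
      ∏ i : Fin r, P false i (hist v.1 i) (v.1 i))
      = ∑' v : Fin r → V,
          B.indicator (fun v => ∏ i : Fin r, P false i (hist v i) (v i)) v :=
        tsum_subtype B (fun v => ∏ i : Fin r, P false i (hist v i) (v i))
    _ ≤ ∑' v : Fin r → V, (∏ i : Fin r, P false i (hist v i) (v i)) *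
          Set.indicator {v : Fin r → V | ∃ i, v i ∈ bad i (hist v i)} (fun _ => (1:ℝ≥0∞)) v :=
        ENNReal.tsum_le_tsum hpt
    _ ≤ ∑' v : Fin r → V, (∏ i : Fin r, P false i (hist v i) (v i)) *
          ∑ i : Fin r, d i (hist v i) :=
        star_lemma r (fun i h => P false i h) bad d hd
    _ ≤ ∑' v : Fin r → V, (∏ i : Fin r, P false i (hist v i) (v i)) * ENNReal.ofReal δ_g :=
        ENNReal.tsum_le_tsum fun v => mul_le_mul_right (hdsum v) _
    _ = (∑' v : Fin r → V, ∏ i : Fin r, P false i (hist v i) (v i)) * ENNReal.ofReal δ_g :=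
        ENNReal.tsum_mul_right
    _ = ENNReal.ofReal δ_g := by
        rw [joint_norm r (fun i h => P false i h), one_mul]
end

section
/- Accuracy ACCEPT test guarantee: let a classifier f be evaluated on n i.i.d. test samples, with K = Σ 1{f(x)=y} Bernoulli successes with unknown success probability p = P_{(x,y)∼D}(f(x)=y). Given DP-noised values K̂ = K + Lap(2/ε) and n̂ = n + Lap(2/ε), if BinLB(K̂ − (2/ε)ln(3/η), n̂ + (2/ε)ln(3/η), η/3) ≥ τ then with probability at least 1−η, p ≥ τ. -/
open MeasureTheory ProbabilityTheory Set Filter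
open scoped BigOperators

lemma laplace_tail_Ioi {b t : ℝ} (hb : 0 < b) (ht : 0 ≤ t) :
    laplaceMeasure b (Set.Ioi t) = ENNReal.ofReal ((1/2) * Real.exp (-t/b)) := by
  rw [laplaceMeasure, withDensity_apply _ measurableSet_Ioi]
  have hcong : ∀ x ∈ Set.Ioi t,
      ENNReal.ofReal ((1 / (2 * b)) * Real.exp (-|x| / b))
        = ENNReal.ofReal ((1 / (2 * b)) * Real.exp (-x / b)) := by
    intro x hx
    rw [abs_of_pos (lt_of_le_of_lt ht hx)]
  rw [setLIntegral_congr_fun measurableSet_Ioi hcong]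
  have hint : IntegrableOn (fun x => (1 / (2 * b)) * Real.exp (-x / b)) (Set.Ioi t) := by
    have h0 := (exp_neg_integrableOn_Ioi t (b := b⁻¹) (by positivity)).const_mul (1 / (2 * b))
    have heq : (fun x : ℝ => (1 / (2 * b)) * Real.exp (-x / b))
        = fun x => (1 / (2 * b)) * Real.exp (-b⁻¹ * x) := by
      funext x
      congr 1
      rw [neg_div, div_eq_inv_mul, ← neg_mul]
    rw [heq]
    exact h0
  rw [← ofReal_integral_eq_lintegral_ofReal hint
    (ae_of_all _ (fun x => by positivity))]
  congr 1
  have hderiv : ∀ x ∈ Set.Ioi t,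
      HasDerivAt (fun x => -(1/2) * Real.exp (-x / b))
        ((1 / (2 * b)) * Real.exp (-x / b)) x := by
    intro x _
    have h1 : HasDerivAt (fun x : ℝ => -x / b) (-1 / b) x :=
      ((hasDerivAt_id x).neg).div_const b
    have h2 := (Real.hasDerivAt_exp (-x / b)).comp x h1
    have h3 := h2.const_mul (-(1/2) : ℝ)
    exact h3.congr_deriv (by ring)
  have htend : Tendsto (fun x => -(1/2) * Real.exp (-x / b)) atTop (nhds 0) := by
    have : Tendsto (fun x : ℝ => -x / b) atTop atBot := by
      apply Tendsto.atBot_div_const hb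
      exact tendsto_neg_atBot_iff.mpr tendsto_id
    have := (Real.tendsto_exp_atBot.comp this).const_mul (-(1/2) : ℝ)
    simpa using this
  have := integral_Ioi_of_hasDerivAt_of_tendsto
    (Continuous.continuousWithinAt (by continuity)) hderiv hint htend
  rw [this]; ring

lemma laplace_tail_Iio {b t : ℝ} (hb : 0 < b) (ht : 0 ≤ t) :
    laplaceMeasure b (Set.Iio (-t)) = ENNReal.ofReal ((1/2) * Real.exp (-t/b)) := by
  rw [← laplace_tail_Ioi hb ht, laplaceMeasure,
    withDensity_apply _ measurableSet_Iio, withDensity_apply _ measurableSet_Ioi]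
  have hpre : Set.Iio (-t) = (Neg.neg : ℝ → ℝ) ⁻¹' (Set.Ioi t) := by
    ext x; simp [Set.mem_Iio, Set.mem_Ioi, lt_neg]
  rw [hpre]
  have := (Measure.measurePreserving_neg (volume : Measure ℝ)).setLIntegral_comp_preimage_emb
    measurableEmbedding_neg
    (fun x => ENNReal.ofReal ((1 / (2 * b)) * Real.exp (-|x| / b))) (Set.Ioi t)
  simp only [abs_neg] at this
  exact this

/-- Accuracy ACCEPT test guarantee.
`Y i ∈ {0,1}` indicates whether the fixed classifier is correct on the `i`-th
i.i.d. test sample, so `K = Σᵢ Yᵢ ∼ Binomial(n, p)` with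
`p = P_{(x,y)∼D}(f(x) = y)`.  `BinLB` is a binomial lower confidence bound:
it covers `p` with the prescribed confidence and is nondecreasing in its count
argument and nonincreasing in its sample-size argument.  Given DP-noised values
`K̂ = K + Lap(2/ε)` and `n̂ = n + Lap(2/ε)` (noises independent of the samples
and of each other), with probability at least `1 − η` the accept condition
`BinLB(K̂ − (2/ε)ln(3/η), n̂ + (2/ε)ln(3/η), η/3) ≥ τ` holds only if `p ≥ τ`;
equivalently, if `p < τ` then the probability of accepting is at most `η`. -/
theorem accuracy_accept_test_guarantee {Ω : Type*} [MeasurableSpace Ω]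
    (P : Measure Ω) [IsProbabilityMeasure P]
    (n : ℕ) (hn : 0 < n)
    (Y : Fin n → Ω → ℝ) (p ε η τ : ℝ)
    (hε : 0 < ε) (hη : 0 < η) (hη1 : η < 1)
    (hYmeas : ∀ i, Measurable (Y i))
    (hY01 : ∀ i ω, Y i ω = 0 ∨ Y i ω = 1)
    (hiid : iIndepFun Y P)
    (hident : ∀ i, P.map (Y i) = P.map (Y ⟨0, hn⟩))
    (hp : p = ∫ ω, Y ⟨0, hn⟩ ω ∂P)
    (BinLB : ℝ → ℝ → ℝ → ℝ)
    (hcov : ∀ η' : ℝ, 0 < η' → η' < 1 →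
      P {ω | p < BinLB (∑ i : Fin n, Y i ω) (n : ℝ) η'} ≤ ENNReal.ofReal η')
    (hmono_count : ∀ k₁ k₂ m η', k₁ ≤ k₂ → BinLB k₁ m η' ≤ BinLB k₂ m η')
    (hmono_size : ∀ c m₁ m₂ η', m₁ ≤ m₂ → BinLB c m₂ η' ≤ BinLB c m₁ η')
    (N₁ N₂ : Ω → ℝ) (hN₁meas : Measurable N₁) (hN₂meas : Measurable N₂)
    (hN₁law : P.map N₁ = laplaceMeasure (2 / ε))
    (hN₂law : P.map N₂ = laplaceMeasure (2 / ε))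
    (hNindep : IndepFun N₁ N₂ P)
    (hYNindep : IndepFun (fun ω i => Y i ω) (fun ω => (N₁ ω, N₂ ω)) P)
    (hbad : p < τ) :
    P {ω | τ ≤ BinLB ((∑ i : Fin n, Y i ω) + N₁ ω - (2 / ε) * Real.log (3 / η))
        ((n : ℝ) + N₂ ω + (2 / ε) * Real.log (3 / η)) (η / 3)} ≤
      ENNReal.ofReal η := by
  set L : ℝ := (2 / ε) * Real.log (3 / η) with hL
  have hb : (0:ℝ) < 2 / ε := by positivity
  have h3η : (1:ℝ) ≤ 3 / η := by
    rw [le_div_iff₀ hη]; linarith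
  have hlog : 0 ≤ Real.log (3 / η) := Real.log_nonneg h3η
  have hL0 : 0 ≤ L := by positivity
  set A : Set Ω := {ω | p < BinLB (∑ i : Fin n, Y i ω) (n : ℝ) (η / 3)} with hA
  set B : Set Ω := {ω | L < N₁ ω} with hB
  set C : Set Ω := {ω | N₂ ω < -L} with hC
  have hsub : {ω | τ ≤ BinLB ((∑ i : Fin n, Y i ω) + N₁ ω - (2 / ε) * Real.log (3 / η))
        ((n : ℝ) + N₂ ω + (2 / ε) * Real.log (3 / η)) (η / 3)} ⊆ A ∪ B ∪ C := by
    intro ω hω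
    by_cases h1 : L < N₁ ω
    · exact Or.inl (Or.inr h1)
    by_cases h2 : N₂ ω < -L
    · exact Or.inr h2
    push_neg at h1 h2
    left; left
    simp only [Set.mem_setOf_eq] at hω ⊢
    have hk : (∑ i : Fin n, Y i ω) + N₁ ω - (2 / ε) * Real.log (3 / η)
        ≤ ∑ i : Fin n, Y i ω := by rw [← hL]; linarith
    have hm : (n : ℝ) ≤ (n : ℝ) + N₂ ω + (2 / ε) * Real.log (3 / η) := by
      rw [← hL]; linarith
    calc p < τ := hbad
      _ ≤ BinLB ((∑ i : Fin n, Y i ω) + N₁ ω - (2 / ε) * Real.log (3 / η))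
            ((n : ℝ) + N₂ ω + (2 / ε) * Real.log (3 / η)) (η / 3) := hω
      _ ≤ BinLB (∑ i : Fin n, Y i ω)
            ((n : ℝ) + N₂ ω + (2 / ε) * Real.log (3 / η)) (η / 3) :=
        hmono_count _ _ _ _ hk
      _ ≤ BinLB (∑ i : Fin n, Y i ω) (n : ℝ) (η / 3) := hmono_size _ _ _ _ hm
  have hexp : Real.exp (-(L / (2 / ε))) = η / 3 := by
    have : L / (2 / ε) = Real.log (3 / η) := by
      rw [hL]; field_simp
    rw [this, Real.exp_neg, Real.exp_log (by positivity)]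
    rw [inv_div]
  have hPB : P B ≤ ENNReal.ofReal (η / 3) := by
    have : P B = (P.map N₁) (Set.Ioi L) := by
      rw [Measure.map_apply hN₁meas measurableSet_Ioi]; rfl
    rw [this, hN₁law, laplace_tail_Ioi hb hL0, neg_div, hexp]
    exact ENNReal.ofReal_le_ofReal (by linarith)
  have hPC : P C ≤ ENNReal.ofReal (η / 3) := by
    have : P C = (P.map N₂) (Set.Iio (-L)) := by
      rw [Measure.map_apply hN₂meas measurableSet_Iio]; rfl
    rw [this, hN₂law, laplace_tail_Iio hb hL0, neg_div, hexp]
    exact ENNReal.ofReal_le_ofReal (by linarith)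
  have hPA : P A ≤ ENNReal.ofReal (η / 3) :=
    hcov (η / 3) (by positivity) (by linarith)
  calc P {ω | τ ≤ BinLB ((∑ i : Fin n, Y i ω) + N₁ ω - (2 / ε) * Real.log (3 / η))
        ((n : ℝ) + N₂ ω + (2 / ε) * Real.log (3 / η)) (η / 3)}
      ≤ P (A ∪ B ∪ C) := measure_mono hsub
    _ ≤ P (A ∪ B) + P C := measure_union_le _ _
    _ ≤ (P A + P B) + P C := add_le_add (measure_union_le _ _) le_rfl
    _ ≤ (ENNReal.ofReal (η/3) + ENNReal.ofReal (η/3)) + ENNReal.ofReal (η/3) := by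
        gcongr
    _ = ENNReal.ofReal (η/3 + η/3 + η/3) := by
        rw [ENNReal.ofReal_add (by positivity) (by positivity),
            ENNReal.ofReal_add (by positivity) (by positivity)]
    _ ≤ ENNReal.ofReal η := ENNReal.ofReal_le_ofReal (by linarith)
end
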